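/- arXiv:1812.03665 — 3 statements merged into one kernel-verified Lean document; each statement's English description precedes it below -/
import Mathlib

section
/- Let N = M = [-1,1] × B̄ ⊆ ℝ × ℝ^{n₂}, where B̄ is the closed unit ball in ℝ^{n₂}. Let f : N → ℝ × ℝ^{n₂} be continuous and write π₁, π₂ for the projections to the factors. Suppose π₂ f(N) ⊆ int B̄, π₁ f(z) < -1 for all z ∈ {-1} × B̄, and π₁ f(z) > 1 for all z ∈ {1} × B̄. Then the homotopy χ(λ, z₁, z₂) = (1-λ)·f(z₁, z₂) + λ·(2z₁, 0) satisfies: χ₀ = f; χ([0,1], N⁻) ∩ M = ∅ where N⁻ = {-1,1} × B̄; χ([0,1], N) ∩ M⁺ = ∅ where M⁺ = [-1,1] × ∂B̄; χ₁(z₁, z₂) = (2z₁, 0); and the linear map A(z₁) = 2z₁ maps ∂[-1,1] = {-1,1} into ℝ \ [-1,1]. Consequently N is correctly aligned with M under f. -/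
open Set Metric

/-- Correct alignment (Definition 3.2 / def:covering) of the window
`N = [-1,1] × B̄` with itself (here `M = N`), for a one-dimensional unstable
direction: there is a homotopy `χ` from `f` to a linear expanding map `(z₁,z₂) ↦ (A z₁, 0)`,
never sending the exit set `N⁻ = {-1,1} × B̄` into `M` and never sending `N` into the
entry set `M⁺ = [-1,1] × ∂B̄`. -/
def CorrectlyAlignedSelf (n₂ : ℕ)
    (f : ℝ × EuclideanSpace ℝ (Fin n₂) → ℝ × EuclideanSpace ℝ (Fin n₂)) : Prop :=
  let N : Set (ℝ × EuclideanSpace ℝ (Fin n₂)) :=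
    Set.Icc (-1 : ℝ) 1 ×ˢ closedBall (0 : EuclideanSpace ℝ (Fin n₂)) 1
  ∃ χ : ℝ → ℝ × EuclideanSpace ℝ (Fin n₂) → ℝ × EuclideanSpace ℝ (Fin n₂),
    ContinuousOn (fun p : ℝ × (ℝ × EuclideanSpace ℝ (Fin n₂)) => χ p.1 p.2)
      (Set.Icc (0:ℝ) 1 ×ˢ N) ∧
    (∀ z ∈ N, χ 0 z = f z) ∧
    (∀ l ∈ Set.Icc (0:ℝ) 1, ∀ z ∈ N, (z.1 = -1 ∨ z.1 = 1) → χ l z ∉ N) ∧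
    (∀ l ∈ Set.Icc (0:ℝ) 1, ∀ z ∈ N,
      χ l z ∉ Set.Icc (-1 : ℝ) 1 ×ˢ sphere (0 : EuclideanSpace ℝ (Fin n₂)) 1) ∧
    ∃ A : ℝ →ₗ[ℝ] ℝ,
      (∀ z ∈ N, χ 1 z = (A z.1, 0)) ∧
      (∀ t : ℝ, (t = -1 ∨ t = 1) → A t ∉ Set.Icc (-1 : ℝ) 1)

/-! The straight-line homotopy from `f` to `(z₁, z₂) ↦ (2 z₁, 0)` works because each of the
two conditions is preserved by convex combinations: on the exit set both endpoints put the first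
coordinate on the same side outside `[-1, 1]` (`Iio (-1)` and `Ioi 1` are convex), and the second
coordinate is shrunk from a point of the open unit ball towards `0`, so it stays in the open ball
and never meets the unit sphere. -/

section AlignmentHomotopy

variable {E : Type*} [NormedAddCommGroup E] [NormedSpace ℝ E]

def alignmentHomotopy (f : ℝ × E → ℝ × E) (l : ℝ) (z : ℝ × E) : ℝ × E :=
  ((1 - l) * (f z).1 + l * (2 * z.1), (1 - l) • (f z).2)

variable {f : ℝ × E → ℝ × E}

@[simp]
lemma alignmentHomotopy_zero : alignmentHomotopy f 0 = f := by
  funext z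
  simp [alignmentHomotopy]

@[simp]
lemma alignmentHomotopy_one (z : ℝ × E) : alignmentHomotopy f 1 z = (2 * z.1, 0) := by
  simp [alignmentHomotopy]

lemma continuousOn_alignmentHomotopy {s : Set (ℝ × E)} (hf : ContinuousOn f s) :
    ContinuousOn (fun p : ℝ × (ℝ × E) => alignmentHomotopy f p.1 p.2) (univ ×ˢ s) := by
  have hfs : ContinuousOn (fun p : ℝ × (ℝ × E) => f p.2) (univ ×ˢ s) :=
    hf.comp continuous_snd.continuousOn fun _ hp => hp.2
  unfold alignmentHomotopy
  fun_prop

lemma two_mul_notMem_Icc {t : ℝ} (ht : t = -1 ∨ t = 1) : 2 * t ∉ Icc (-1 : ℝ) 1 := by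
  rcases ht with rfl | rfl <;> norm_num

variable {l : ℝ} {z : ℝ × E}

lemma alignmentHomotopy_notMem_window_of_exit (hl : l ∈ Icc (0 : ℝ) 1)
    (hz : z.1 = -1 ∨ z.1 = 1) (hminus : z.1 = -1 → (f z).1 < -1)
    (hplus : z.1 = 1 → 1 < (f z).1) :
    alignmentHomotopy f l z ∉ Icc (-1 : ℝ) 1 ×ˢ closedBall (0 : E) 1 := by
  intro hmem
  have hfst : (1 - l) * (f z).1 + l * (2 * z.1) ∈ Icc (-1 : ℝ) 1 := hmem.1
  rcases hz with hz | hz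
  · have hlt : (1 - l) * (f z).1 + l * (2 * z.1) < -1 :=
      convex_Iio (-1 : ℝ) (hminus hz) (show 2 * z.1 < -1 by linarith)
        (sub_nonneg.2 hl.2) hl.1 (sub_add_cancel 1 l)
    linarith [hfst.1]
  · have hgt : 1 < (1 - l) * (f z).1 + l * (2 * z.1) :=
      convex_Ioi (1 : ℝ) (hplus hz) (show 1 < 2 * z.1 by linarith)
        (sub_nonneg.2 hl.2) hl.1 (sub_add_cancel 1 l)
    linarith [hfst.2]

lemma alignmentHomotopy_notMem_entry (hl : l ∈ Icc (0 : ℝ) 1)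
    (hfz : (f z).2 ∈ ball (0 : E) 1) :
    alignmentHomotopy f l z ∉ Icc (-1 : ℝ) 1 ×ˢ sphere (0 : E) 1 := by
  have hball : (1 - l) • (f z).2 ∈ ball (0 : E) 1 := by
    simpa using convex_ball (0 : E) 1 hfz (mem_ball_self one_pos)
      (sub_nonneg.2 hl.2) hl.1 (sub_add_cancel 1 l)
  exact fun hmem => sphere_disjoint_ball.ne_of_mem hmem.2 hball rfl

end AlignmentHomotopy

theorem correctlyAlignedSelf_of_crossing {n₂ : ℕ}
    {f : ℝ × EuclideanSpace ℝ (Fin n₂) → ℝ × EuclideanSpace ℝ (Fin n₂)}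
    (hf : ContinuousOn f (Icc (-1 : ℝ) 1 ×ˢ closedBall 0 1))
    (h2 : ∀ z ∈ Icc (-1 : ℝ) 1 ×ˢ closedBall 0 1, (f z).2 ∈ ball 0 1)
    (hminus : ∀ z ∈ Icc (-1 : ℝ) 1 ×ˢ closedBall 0 1, z.1 = -1 → (f z).1 < -1)
    (hplus : ∀ z ∈ Icc (-1 : ℝ) 1 ×ˢ closedBall 0 1, z.1 = 1 → 1 < (f z).1) :
    CorrectlyAlignedSelf n₂ f :=
  ⟨alignmentHomotopy f,
    (continuousOn_alignmentHomotopy hf).mono (prod_mono (subset_univ _) le_rfl),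
    fun _ _ => by rw [alignmentHomotopy_zero],
    fun _ hl z hz hz1 => alignmentHomotopy_notMem_window_of_exit hl hz1 (hminus z hz) (hplus z hz),
    fun _ hl z hz => alignmentHomotopy_notMem_entry hl (h2 z hz),
    2 • LinearMap.id, fun z _ => by simp,
    fun _ ht => by simpa using two_mul_notMem_Icc ht⟩

/-- Lemma 5.1 (lem:covering): verification of correct alignment of
`N = M = [-1,1] × B̄` under `f`, via the explicit homotopy
`χ(λ,z₁,z₂) = (1-λ)·f(z₁,z₂) + λ·(2z₁,0)`. -/
theorem stmt_2 (n₂ : ℕ)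
    (f : ℝ × EuclideanSpace ℝ (Fin n₂) → ℝ × EuclideanSpace ℝ (Fin n₂))
    (N : Set (ℝ × EuclideanSpace ℝ (Fin n₂)))
    (hN : N = Set.Icc (-1 : ℝ) 1 ×ˢ closedBall (0 : EuclideanSpace ℝ (Fin n₂)) 1)
    (hf : ContinuousOn f N)
    (h2 : ∀ z ∈ N, (f z).2 ∈ ball (0 : EuclideanSpace ℝ (Fin n₂)) 1)
    (hminus : ∀ z ∈ N, z.1 = -1 → (f z).1 < -1)
    (hplus : ∀ z ∈ N, z.1 = 1 → 1 < (f z).1)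
    (χ : ℝ → ℝ × EuclideanSpace ℝ (Fin n₂) → ℝ × EuclideanSpace ℝ (Fin n₂))
    (hχ : ∀ l z, χ l z = ((1 - l) * (f z).1 + l * (2 * z.1), (1 - l) • (f z).2)) :
    (∀ z, χ 0 z = f z) ∧
    (∀ l ∈ Set.Icc (0:ℝ) 1, ∀ z ∈ N, (z.1 = -1 ∨ z.1 = 1) → χ l z ∉ N) ∧
    (∀ l ∈ Set.Icc (0:ℝ) 1, ∀ z ∈ N,
      χ l z ∉ Set.Icc (-1 : ℝ) 1 ×ˢ sphere (0 : EuclideanSpace ℝ (Fin n₂)) 1) ∧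
    (∀ z, χ 1 z = (2 * z.1, 0)) ∧
    (∀ t : ℝ, (t = -1 ∨ t = 1) → (2 * t) ∉ Set.Icc (-1 : ℝ) 1) ∧
    CorrectlyAlignedSelf n₂ f := by
  obtain rfl : χ = alignmentHomotopy f := funext₂ hχ
  subst hN
  exact ⟨fun z => by rw [alignmentHomotopy_zero],
    fun _ hl z hz hz1 => alignmentHomotopy_notMem_window_of_exit hl hz1 (hminus z hz) (hplus z hz),
    fun _ hl z hz => alignmentHomotopy_notMem_entry hl (h2 z hz),
    alignmentHomotopy_one, fun _ => two_mul_notMem_Icc,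
    correctlyAlignedSelf_of_crossing hf h2 hminus hplus⟩
end

section
/- Let V be a Borel subset of ℝⁿ, and for y ∈ ℝ^{n−1} let L_y = {(x, y) : x ∈ ℝ} ⊆ ℝⁿ. If n − 1 ≤ s ≤ n, then ∫_{ℝ^{n−1}} H^{s−(n−1)}(V ∩ L_y) dy ≤ H^s(V), where H^t denotes t-dimensional Hausdorff (outer) measure. In particular, if H^{s−(n−1)}(V ∩ L_y) > 0 on a set of y of positive Lebesgue measure, then dim_H(V) ≥ s. -/
/-!
Take covers `t` of `V` by sets of diameter at most `δ` whose `s`-dimensional sums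
`∑ ediam (t n) ^ s` nearly attain `μH[s] V`. At height `y` the slices of the `t n` cover the
slice of `V`, have diameter at most `ediam (t n)`, and are nonempty only for `y` in the
projection of `t n`, a set of volume at most `ediam (t n) ^ m`. Hence the cover sum of the
slice of `V` at scale `δ` is bounded by `∑ ediam (t n) ^ (s - m) * 1_{proj (t n)} (y)`, whose
integral is at most `∑ ediam (t n) ^ s`. Letting `δ → 0` and applying Fatou's lemma gives the
inequality; if `μH[s] V = 0`, almost every slice is `μH[s - m]`-null, so `dimH V ≥ s`.
-/

open MeasureTheory Metric Filter Set Topology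

open scoped ENNReal

theorem exists_cover_tsum_le_hausdorffMeasure_add {X : Type*} [EMetricSpace X]
    [MeasurableSpace X] [BorelSpace X] (d : ℝ) (s : Set X) {r ε : ℝ≥0∞} (hr : 0 < r)
    (hε : ε ≠ 0) (hs : μH[d] s ≠ ∞) :
    ∃ t : ℕ → Set X, s ⊆ ⋃ n, t n ∧ (∀ n, ediam (t n) ≤ r) ∧
      ∑' n, ⨆ _ : (t n).Nonempty, ediam (t n) ^ d ≤ μH[d] s + ε := by
  have hlt : (⨅ (t : ℕ → Set X) (_ : s ⊆ ⋃ n, t n) (_ : ∀ n, ediam (t n) ≤ r),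
      ∑' n, ⨆ _ : (t n).Nonempty, ediam (t n) ^ d) < μH[d] s + ε := by
    refine lt_of_le_of_lt ?_ (ENNReal.lt_add_right hs hε)
    rw [Measure.hausdorffMeasure_apply]
    exact le_iSup₂_of_le r hr le_rfl
  simp only [iInf_lt_iff] at hlt
  obtain ⟨t, hcover, hdiam, hsum⟩ := hlt
  exact ⟨t, hcover, hdiam, hsum.le⟩

def slice {X Y : Type*} (T : Set (X × Y)) (y : Y) : Set X := {x | (x, y) ∈ T}

theorem ediam_slice_le {X Y : Type*} [PseudoEMetricSpace X] [PseudoEMetricSpace Y]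
    (T : Set (X × Y)) (y : Y) : ediam (slice T y) ≤ ediam T :=
  ediam_le fun _ hx _ hx' =>
    (le_of_eq (by simp [Prod.edist_eq])).trans (edist_le_ediam_of_mem hx hx')

section SliceMajorant

variable {X : Type*} [PseudoEMetricSpace X] {m : ℕ}

noncomputable def sliceMajorant (d : ℝ) (t : ℕ → Set (X × (Fin m → ℝ))) (y : Fin m → ℝ) :
    ℝ≥0∞ :=
  ∑' n, (toMeasurable volume (Prod.snd '' t n)).indicator (fun _ => ediam (t n) ^ d) y

theorem measurable_sliceMajorant (d : ℝ) (t : ℕ → Set (X × (Fin m → ℝ))) :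
    Measurable (sliceMajorant d t) :=
  Measurable.tsum fun _ => measurable_const.indicator (measurableSet_toMeasurable _ _)

theorem lintegral_sliceMajorant_le {s : ℝ} (hs : (m : ℝ) ≤ s) (t : ℕ → Set (X × (Fin m → ℝ))) :
    ∫⁻ y, sliceMajorant (s - m) t y ≤ ∑' n, ⨆ _ : (t n).Nonempty, ediam (t n) ^ s := by
  simp only [sliceMajorant]
  rw [lintegral_tsum fun n =>
    (measurable_const.indicator (measurableSet_toMeasurable _ _)).aemeasurable]
  refine ENNReal.tsum_le_tsum fun n => ?_
  rw [lintegral_indicator_const (measurableSet_toMeasurable _ _), measure_toMeasurable]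
  rcases (t n).eq_empty_or_nonempty with hempty | hne
  · simp [hempty]
  calc ediam (t n) ^ (s - m) * volume (Prod.snd '' t n)
      ≤ ediam (t n) ^ (s - m) * ediam (t n) ^ m := by
        gcongr
        calc volume (Prod.snd '' t n) ≤ ediam (Prod.snd '' t n) ^ m := by
              simpa using Real.volume_pi_le_diam_pow (Prod.snd '' t n)
          _ ≤ ediam (t n) ^ m := by
              gcongr
              simpa using LipschitzWith.prod_snd.ediam_image_le (t n)
    _ = ediam (t n) ^ s := by
        rw [← ENNReal.rpow_natCast, ← ENNReal.rpow_add_of_nonneg _ _ (sub_nonneg.2 hs)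
          m.cast_nonneg, sub_add_cancel]
    _ ≤ ⨆ _ : (t n).Nonempty, ediam (t n) ^ s := le_iSup_of_le hne le_rfl

theorem tsum_ediam_slice_le_sliceMajorant {d : ℝ} (hd : 0 ≤ d)
    (t : ℕ → Set (X × (Fin m → ℝ))) (y : Fin m → ℝ) :
    ∑' n : {n | (slice (t n) y).Nonempty}, ediam (slice (t n) y) ^ d
      ≤ sliceMajorant d t y := by
  rw [tsum_subtype _ fun n => ediam (slice (t n) y) ^ d, sliceMajorant]
  refine ENNReal.tsum_le_tsum fun n => ?_
  by_cases hne : (slice (t n) y).Nonempty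
  · have hy : y ∈ toMeasurable volume (Prod.snd '' t n) :=
      subset_toMeasurable _ _ ⟨(hne.some, y), hne.some_mem, rfl⟩
    rw [indicator_of_mem (show n ∈ {n | (slice (t n) y).Nonempty} from hne),
      indicator_of_mem hy]
    exact ENNReal.rpow_le_rpow (ediam_slice_le _ _) hd
  · rw [indicator_of_notMem (show n ∉ {n | (slice (t n) y).Nonempty} from hne)]
    exact zero_le

end SliceMajorant

section Fubini

variable {X : Type*} [EMetricSpace X] [MeasurableSpace X] [BorelSpace X] {m : ℕ} {s : ℝ}

/-- `y ↦ μH[s - m] (slice V y)` need not be measurable, so its vanishing almost everywhere is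
read off from a measurable majorant. -/
theorem exists_measurable_hausdorffMeasure_slice_le (hs : (m : ℝ) ≤ s)
    (V : Set (X × (Fin m → ℝ))) :
    ∃ g : (Fin m → ℝ) → ℝ≥0∞, Measurable g ∧ (∀ y, μH[s - m] (slice V y) ≤ g y) ∧
      ∫⁻ y, g y ≤ μH[s] V := by
  by_cases hV : μH[s] V = ∞
  · exact ⟨fun _ => ∞, measurable_const, fun _ => le_top, by rw [hV]; exact le_top⟩
  have hd : 0 ≤ s - m := sub_nonneg.2 hs
  choose t hcover hdiam hsum using fun k : ℕ =>
    exists_cover_tsum_le_hausdorffMeasure_add s V (ENNReal.inv_pos.2 (ENNReal.natCast_ne_top k))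
      (ENNReal.inv_ne_zero.2 (ENNReal.natCast_ne_top k)) hV
  refine ⟨fun y => liminf (fun k => sliceMajorant (s - m) (t k) y) atTop,
    .liminf fun k => measurable_sliceMajorant _ _, fun y => ?_, ?_⟩
  · refine (Measure.hausdorffMeasure_le_liminf_tsum (s - m) (slice V y) _
      ENNReal.tendsto_inv_nat_nhds_zero (fun k (n : {n | (slice (t k n) y).Nonempty}) =>
        slice (t k n) y) (.of_forall fun k n => (ediam_slice_le _ _).trans (hdiam k n))
      (.of_forall fun k x hx => ?_)).trans
      (liminf_le_liminf (.of_forall fun k => tsum_ediam_slice_le_sliceMajorant hd _ _))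
    obtain ⟨n, hn⟩ := mem_iUnion.1 (hcover k hx)
    exact mem_iUnion.2 ⟨⟨n, x, hn⟩, hn⟩
  · have hlim : Tendsto (fun k : ℕ => μH[s] V + (k : ℝ≥0∞)⁻¹) atTop (𝓝 (μH[s] V)) := by
      simpa using tendsto_const_nhds.add ENNReal.tendsto_inv_nat_nhds_zero
    calc ∫⁻ y, liminf (fun k => sliceMajorant (s - m) (t k) y) atTop
        ≤ liminf (fun k => ∫⁻ y, sliceMajorant (s - m) (t k) y) atTop :=
          lintegral_liminf_le fun k => measurable_sliceMajorant _ _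
      _ ≤ liminf (fun k : ℕ => μH[s] V + (k : ℝ≥0∞)⁻¹) atTop :=
          liminf_le_liminf <| .of_forall fun k =>
            (lintegral_sliceMajorant_le hs (t k)).trans (hsum k)
      _ = μH[s] V := hlim.liminf_eq

theorem lintegral_hausdorffMeasure_slice_le (hs : (m : ℝ) ≤ s) (V : Set (X × (Fin m → ℝ))) :
    ∫⁻ y, μH[s - m] (slice V y) ≤ μH[s] V := by
  obtain ⟨g, -, hle, hint⟩ := exists_measurable_hausdorffMeasure_slice_le hs V
  exact (lintegral_mono hle).trans hint

theorem ae_hausdorffMeasure_slice_eq_zero (hs : (m : ℝ) ≤ s) {V : Set (X × (Fin m → ℝ))}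
    (hV : μH[s] V = 0) : ∀ᵐ y, μH[s - m] (slice V y) = 0 := by
  obtain ⟨g, hg, hle, hint⟩ := exists_measurable_hausdorffMeasure_slice_le hs V
  have hg0 : g =ᵐ[volume] 0 := (lintegral_eq_zero_iff hg).1 (le_antisymm (hV ▸ hint) zero_le)
  filter_upwards [hg0] with y hy
  exact le_antisymm ((hle y).trans_eq hy) zero_le

end Fubini

theorem stmt_7_general (m : ℕ) (s : ℝ) (hs1 : (m : ℝ) ≤ s)
    (V : Set (ℝ × (Fin m → ℝ))) :
    (∫⁻ y : Fin m → ℝ, μH[s - m] {x : ℝ | (x, y) ∈ V} ≤ μH[s] V) ∧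
    (0 < volume {y : Fin m → ℝ | 0 < μH[s - m] {x : ℝ | (x, y) ∈ V}} →
      ENNReal.ofReal s ≤ dimH V) := by
  refine ⟨lintegral_hausdorffMeasure_slice_le hs1 V, fun hpos => ?_⟩
  refine le_dimH_of_hausdorffMeasure_ne_zero (d := s.toNNReal) fun hV => hpos.ne' ?_
  rw [Real.coe_toNNReal s ((Nat.cast_nonneg m).trans hs1)] at hV
  exact measure_mono_null (fun y hy => hy.ne')
    (ae_iff.1 (ae_hausdorffMeasure_slice_eq_zero hs1 hV))

/-- Lemma 8.2 (lem:Hausdorff-product, Falconer): Fubini-type inequality for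
Hausdorff measures of line slices.  For Borel `V ⊆ ℝⁿ = ℝ × ℝ^{n-1}` and
`n−1 ≤ s ≤ n` (here `n = m+1`),
`∫ H^{s-(n-1)}(V ∩ L_y) dy ≤ H^s(V)`; in particular if the slices have positive
`H^{s-(n-1)}`-measure for a positive measure set of `y`, then `dim_H V ≥ s`. -/
theorem stmt_7 (m : ℕ) (s : ℝ) (hs1 : (m : ℝ) ≤ s) (hs2 : s ≤ (m : ℝ) + 1)
    (V : Set (ℝ × (Fin m → ℝ))) (hV : MeasurableSet V) :
    (∫⁻ y : Fin m → ℝ, μH[s - m] {x : ℝ | (x, y) ∈ V} ≤ μH[s] V) ∧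
    (0 < volume {y : Fin m → ℝ | 0 < μH[s - m] {x : ℝ | (x, y) ∈ V}} →
      ENNReal.ofReal s ≤ dimH V) :=
  stmt_7_general m s hs1 V
end

section
/- Let f : E × ℝⁿ → ℝⁿ (with E ⊆ ℝ a parameter interval, n = n_u + n_s + 2, coordinates (x, y, I, θ)) be C², and let a = (a_y, a_I, a_θ) ∈ ℝ₊³. Suppose z₁ − z₂ = (x, y, I, θ) satisfies ‖x‖ ≠ 0, ‖y‖ ≤ a_y‖x‖, ‖I‖ ≤ ε a_I‖x‖, ‖θ‖ ≤ a_θ‖x‖ with ε ≤ ε₀. Write m(A) = inf_{‖v‖=1}‖Av‖ for square matrices A, and let D_h denote uniform bounds over E × N for the partial derivatives of components of f. If the denominator d := m(∂f_x/∂x) − ‖∂f_x/∂y‖a_y − ε₀‖∂f_x/∂I‖a_I − ‖∂f_x/∂θ‖a_θ is positive, then ‖π_x(f(ε,z₁) − f(ε,z₂))‖ ≥ d·‖x‖. -/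
/-!
Applying the mean value theorem to every continuous linear functional along the segment from
`z₂` to `z₁` shows, by Hahn–Banach, that `π_x (f z₁ - f z₂)` lies in the closed convex hull of
the values `π_x (Df(z) (z₁ - z₂))`, `z ∈ N`. Inside the cone each such value is `T x` with
`T = ∂f_x/∂x (z) ∈ Mxx`, up to an error of norm at most
`B = (b_y a_y + ε₀ b_I a_I + b_θ a_θ) ‖x‖`. Hence all of them lie in the convex set
`{T x | T ∈ Mxx} + closedBall 0 B`, whose elements have norm at least `mxx ‖x‖ - B = d ‖x‖`,
and this closed condition passes to the closed convex hull.
-/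

open Set ContinuousLinearMap

/-- Phase space `ℝ^{n_u} × ℝ^{n_s} × ℝ × ℝ` with coordinates `(x,y,I,θ)`. -/
abbrev Ph (nu ns : ℕ) := EuclideanSpace ℝ (Fin nu) × EuclideanSpace ℝ (Fin ns) × ℝ × ℝ

noncomputable def inx (nu ns : ℕ) : EuclideanSpace ℝ (Fin nu) →L[ℝ] Ph nu ns :=
  ContinuousLinearMap.inl ℝ _ _

noncomputable def iny (nu ns : ℕ) : EuclideanSpace ℝ (Fin ns) →L[ℝ] Ph nu ns :=
  (ContinuousLinearMap.inr ℝ _ _).comp (ContinuousLinearMap.inl ℝ _ (ℝ × ℝ))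

noncomputable def inI (nu ns : ℕ) : ℝ →L[ℝ] Ph nu ns :=
  (ContinuousLinearMap.inr ℝ _ _).comp ((ContinuousLinearMap.inr ℝ _ _).comp
    (ContinuousLinearMap.inl ℝ ℝ ℝ))

noncomputable def inθ (nu ns : ℕ) : ℝ →L[ℝ] Ph nu ns :=
  (ContinuousLinearMap.inr ℝ _ _).comp ((ContinuousLinearMap.inr ℝ _ _).comp
    (ContinuousLinearMap.inr ℝ ℝ ℝ))

noncomputable def px (nu ns : ℕ) : Ph nu ns →L[ℝ] EuclideanSpace ℝ (Fin nu) :=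
  ContinuousLinearMap.fst ℝ _ _

open scoped Pointwise

section MeanValueInclusion

variable {E F : Type*} [NormedAddCommGroup E] [NormedSpace ℝ E]
  [NormedAddCommGroup F] [NormedSpace ℝ F]

theorem Convex.sub_mem_closure_convexHull_image_fderiv {s : Set E} (hs : Convex ℝ s)
    {f : E → F} {f' : E → E →L[ℝ] F} (hf : ∀ z ∈ s, HasFDerivAt f (f' z) z)
    {x y : E} (hx : x ∈ s) (hy : y ∈ s) :
    f y - f x ∈ closure (convexHull ℝ ((fun z => f' z (y - x)) '' s)) := by
  by_contra hnot
  obtain ⟨L, u, hLu, hsep⟩ := geometric_hahn_banach_point_closed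
    (convex_convexHull ℝ _).closure isClosed_closure hnot
  obtain ⟨z, hz, hmvt⟩ := domain_mvt (f := L ∘ f) (f' := fun z => L.comp (f' z))
    (fun z hz => (L.hasFDerivAt.comp z (hf z hz)).hasFDerivWithinAt) hs hx hy
  have hzs : z ∈ s := hs.segment_subset hx hy hz
  have := hsep _ (subset_closure (subset_convexHull ℝ _ ⟨z, hzs, rfl⟩))
  simp only [Function.comp_apply, ← map_sub, comp_apply] at hmvt
  linarith

theorem sub_le_norm_of_mem_closure_convexHull {S K : Set F} {r B : ℝ} (hK : Convex ℝ K)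
    (hKr : ∀ k ∈ K, r ≤ ‖k‖) (hSK : S ⊆ K + Metric.closedBall (0 : F) B) {v : F}
    (hv : v ∈ closure (convexHull ℝ S)) : r - B ≤ ‖v‖ := by
  have hsub : K + Metric.closedBall (0 : F) B ⊆ {w | r - B ≤ ‖w‖} := by
    rintro _ ⟨k, hk, b, hb, rfl⟩
    rw [mem_closedBall_zero_iff] at hb
    have := norm_sub_le_norm_add k b
    show r - B ≤ ‖k + b‖
    linarith [hKr k hk]
  exact closure_minimal ((convexHull_min hSK (hK.add (convex_closedBall 0 B))).trans hsub)
    (isClosed_le continuous_const continuous_norm) hv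

end MeanValueInclusion

section PhaseSpace

variable {nu ns : ℕ}

theorem fst_apply_eq_sum_blocks (A : Ph nu ns →L[ℝ] Ph nu ns) (w : Ph nu ns) :
    (A w).1 = (px nu ns ∘L A ∘L inx nu ns) w.1 + (px nu ns ∘L A ∘L iny nu ns) w.2.1
      + (px nu ns ∘L A ∘L inI nu ns) w.2.2.1 + (px nu ns ∘L A ∘L inθ nu ns) w.2.2.2 := by
  have hw : inx nu ns w.1 + iny nu ns w.2.1 + inI nu ns w.2.2.1 + inθ nu ns w.2.2.2 = w := by
    simp [inx, iny, inI, inθ]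
  conv_lhs => rw [← hw]
  simp only [map_add, comp_apply, px, coe_fst', Prod.fst_add]

theorem norm_fst_apply_sub_block_le (A : Ph nu ns →L[ℝ] Ph nu ns) (w : Ph nu ns) :
    ‖(A w).1 - (px nu ns ∘L A ∘L inx nu ns) w.1‖ ≤
      ‖px nu ns ∘L A ∘L iny nu ns‖ * ‖w.2.1‖ + ‖px nu ns ∘L A ∘L inI nu ns‖ * |w.2.2.1|
        + ‖px nu ns ∘L A ∘L inθ nu ns‖ * |w.2.2.2| := by
  rw [fst_apply_eq_sum_blocks, add_assoc, add_assoc, add_sub_cancel_left, ← add_assoc,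
    ← Real.norm_eq_abs, ← Real.norm_eq_abs]
  refine norm_add₃_le.trans ?_
  gcongr <;> exact le_opNorm _ _

theorem norm_fst_apply_sub_block_le_of_cone {A : Ph nu ns →L[ℝ] Ph nu ns} {w : Ph nu ns}
    {ε ε₀ ay aI aθ bxy bxI bxθ : ℝ} (hε : ε ≤ ε₀) (haI : 0 ≤ aI)
    (hbxy : ‖px nu ns ∘L A ∘L iny nu ns‖ ≤ bxy) (hbxI : ‖px nu ns ∘L A ∘L inI nu ns‖ ≤ bxI)
    (hbxθ : ‖px nu ns ∘L A ∘L inθ nu ns‖ ≤ bxθ)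
    (hy : ‖w.2.1‖ ≤ ay * ‖w.1‖) (hI : |w.2.2.1| ≤ ε * aI * ‖w.1‖)
    (hθ : |w.2.2.2| ≤ aθ * ‖w.1‖) :
    ‖(A w).1 - (px nu ns ∘L A ∘L inx nu ns) w.1‖ ≤
      (bxy * ay + ε₀ * bxI * aI + bxθ * aθ) * ‖w.1‖ := by
  have hI₀ : |w.2.2.1| ≤ ε₀ * aI * ‖w.1‖ := hI.trans (by gcongr)
  calc _ ≤ _ := norm_fst_apply_sub_block_le A w
    _ ≤ bxy * (ay * ‖w.1‖) + bxI * (ε₀ * aI * ‖w.1‖) + bxθ * (aθ * ‖w.1‖) := by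
      have := (norm_nonneg _).trans hbxy
      have := (norm_nonneg _).trans hbxI
      have := (norm_nonneg _).trans hbxθ
      gcongr
    _ = _ := by ring

end PhaseSpace

-- `Mxx` stands for the interval hull of the blocks `∂f_x/∂x`, and `mxx` for a lower bound of
-- `m` on it.
theorem stmt_18_general (nu ns : ℕ) (ε₀ ay aI aθ : ℝ)
    (haI : 0 < aI)
    (N : Set (Ph nu ns)) (hNconv : Convex ℝ N)
    (f : ℝ → Ph nu ns → Ph nu ns)
    (D : ℝ → Ph nu ns → (Ph nu ns →L[ℝ] Ph nu ns))
    (hD : ∀ ε ∈ Set.Icc 0 ε₀, ∀ z ∈ N, HasFDerivAt (f ε) (D ε z) z)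
    (mxx bxy bxI bxθ : ℝ)
    (Mxx : Set (EuclideanSpace ℝ (Fin nu) →L[ℝ] EuclideanSpace ℝ (Fin nu)))
    (hMconv : Convex ℝ Mxx)
    (hMmem : ∀ ε ∈ Set.Icc 0 ε₀, ∀ z ∈ N,
      (px nu ns).comp ((D ε z).comp (inx nu ns)) ∈ Mxx)
    (hMlow : ∀ T ∈ Mxx, ∀ ξ, mxx * ‖ξ‖ ≤ ‖T ξ‖)
    (hbxy : ∀ ε ∈ Set.Icc 0 ε₀, ∀ z ∈ N,
      ‖(px nu ns).comp ((D ε z).comp (iny nu ns))‖ ≤ bxy)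
    (hbxI : ∀ ε ∈ Set.Icc 0 ε₀, ∀ z ∈ N,
      ‖(px nu ns).comp ((D ε z).comp (inI nu ns))‖ ≤ bxI)
    (hbxθ : ∀ ε ∈ Set.Icc 0 ε₀, ∀ z ∈ N,
      ‖(px nu ns).comp ((D ε z).comp (inθ nu ns))‖ ≤ bxθ)
    (d : ℝ) (hd : d = mxx - bxy * ay - ε₀ * bxI * aI - bxθ * aθ)
    (ε : ℝ) (hε : ε ∈ Set.Icc 0 ε₀) (z₁ z₂ : Ph nu ns)
    (hz₁ : z₁ ∈ N) (hz₂ : z₂ ∈ N)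
    (hy : ‖(z₁ - z₂).2.1‖ ≤ ay * ‖(z₁ - z₂).1‖)
    (hI : |(z₁ - z₂).2.2.1| ≤ ε * aI * ‖(z₁ - z₂).1‖)
    (hθ : |(z₁ - z₂).2.2.2| ≤ aθ * ‖(z₁ - z₂).1‖) :
    d * ‖(z₁ - z₂).1‖ ≤ ‖(f ε z₁ - f ε z₂).1‖ := by
  set Δ := z₁ - z₂
  have hv := hNconv.sub_mem_closure_convexHull_image_fderiv
    (f := fun z => (f ε z).1) (f' := fun z => px nu ns ∘L D ε z)
    (fun z hz => (px nu ns).hasFDerivAt.comp z (hD ε hε z hz)) hz₂ hz₁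
  have hblocks : (fun z => (px nu ns ∘L D ε z) Δ) '' N ⊆
      (fun T => T Δ.1) '' Mxx +
        Metric.closedBall 0 ((bxy * ay + ε₀ * bxI * aI + bxθ * aθ) * ‖Δ.1‖) := by
    rintro _ ⟨z, hz, rfl⟩
    refine ⟨_, ⟨_, hMmem ε hε z hz, rfl⟩, _, mem_closedBall_zero_iff.2 ?_, add_sub_cancel _ _⟩
    exact norm_fst_apply_sub_block_le_of_cone hε.2 haI.le (hbxy ε hε z hz) (hbxI ε hε z hz)
      (hbxθ ε hε z hz) hy hI hθ
  have hlow := sub_le_norm_of_mem_closure_convexHull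
    (hMconv.linear_image (apply ℝ _ Δ.1).toLinearMap)
    (by rintro _ ⟨T, hT, rfl⟩; exact hMlow T hT Δ.1) hblocks hv
  calc d * ‖Δ.1‖ = mxx * ‖Δ.1‖ - (bxy * ay + ε₀ * bxI * aI + bxθ * aθ) * ‖Δ.1‖ := by
        rw [hd]; ring
    _ ≤ ‖(f ε z₁ - f ε z₂).1‖ := hlow

/-- Key expansion lower bound in the proof of Lemma 5.2 (th:param-dep-cones):
inside the cone (`‖y‖ ≤ a_y‖x‖`, `|I| ≤ εa_I‖x‖`, `|θ| ≤ a_θ‖x‖`, `x ≠ 0`),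
if the interval-matrix bounds give a positive denominator
`d = m(∂f_x/∂x) − ‖∂f_x/∂y‖a_y − ε₀‖∂f_x/∂I‖a_I − ‖∂f_x/∂θ‖a_θ`, then
`‖π_x(f(ε,z₁) − f(ε,z₂))‖ ≥ d‖x‖`.  The set `Mxx` encodes the interval hull of
the `∂f_x/∂x` blocks, with `m(A) ≥ mxx` for every `A` in it. -/
theorem stmt_18 (nu ns : ℕ) (ε₀ ay aI aθ : ℝ)
    (hε₀ : 0 ≤ ε₀) (hay : 0 < ay) (haI : 0 < aI) (haθ : 0 < aθ)
    (N : Set (Ph nu ns)) (hNconv : Convex ℝ N)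
    (f : ℝ → Ph nu ns → Ph nu ns)
    (D : ℝ → Ph nu ns → (Ph nu ns →L[ℝ] Ph nu ns))
    (hD : ∀ ε ∈ Set.Icc 0 ε₀, ∀ z ∈ N, HasFDerivAt (f ε) (D ε z) z)
    (mxx bxy bxI bxθ : ℝ)
    (Mxx : Set (EuclideanSpace ℝ (Fin nu) →L[ℝ] EuclideanSpace ℝ (Fin nu)))
    (hMconv : Convex ℝ Mxx) (hMclosed : IsClosed Mxx)
    (hMmem : ∀ ε ∈ Set.Icc 0 ε₀, ∀ z ∈ N,
      (px nu ns).comp ((D ε z).comp (inx nu ns)) ∈ Mxx)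
    (hMlow : ∀ T ∈ Mxx, ∀ ξ, mxx * ‖ξ‖ ≤ ‖T ξ‖)
    (hbxy : ∀ ε ∈ Set.Icc 0 ε₀, ∀ z ∈ N,
      ‖(px nu ns).comp ((D ε z).comp (iny nu ns))‖ ≤ bxy)
    (hbxI : ∀ ε ∈ Set.Icc 0 ε₀, ∀ z ∈ N,
      ‖(px nu ns).comp ((D ε z).comp (inI nu ns))‖ ≤ bxI)
    (hbxθ : ∀ ε ∈ Set.Icc 0 ε₀, ∀ z ∈ N,
      ‖(px nu ns).comp ((D ε z).comp (inθ nu ns))‖ ≤ bxθ)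
    (d : ℝ) (hd : d = mxx - bxy * ay - ε₀ * bxI * aI - bxθ * aθ) (hdpos : 0 < d)
    (ε : ℝ) (hε : ε ∈ Set.Icc 0 ε₀) (z₁ z₂ : Ph nu ns)
    (hz₁ : z₁ ∈ N) (hz₂ : z₂ ∈ N)
    (hx : (z₁ - z₂).1 ≠ 0)
    (hy : ‖(z₁ - z₂).2.1‖ ≤ ay * ‖(z₁ - z₂).1‖)
    (hI : |(z₁ - z₂).2.2.1| ≤ ε * aI * ‖(z₁ - z₂).1‖)
    (hθ : |(z₁ - z₂).2.2.2| ≤ aθ * ‖(z₁ - z₂).1‖) :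
    d * ‖(z₁ - z₂).1‖ ≤ ‖(f ε z₁ - f ε z₂).1‖ :=
  stmt_18_general nu ns ε₀ ay aI aθ haI N hNconv f D hD mxx bxy bxI bxθ Mxx hMconv hMmem hMlow hbxy
    hbxI hbxθ d hd ε hε z₁ z₂ hz₁ hz₂ hy hI hθ
end
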